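/- Let E ∈ ℂ not be an eigenvalue of h. Then the corner block g_{1,n} is invertible and T(E) = [[−B_n⁻¹·(g_{1,n})⁻¹, −B_n⁻¹·(g_{1,n})⁻¹·g_{1,1}·C_1], [g_{n,n}·(g_{1,n})⁻¹, g_{n,n}·(g_{1,n})⁻¹·g_{1,1}·C_1 − g_{n,1}·C_1]] (a 2m×2m matrix written in m×m blocks). -/

import Mathlib

open Matrix

noncomputable def tstep {m : ℕ} (A B C : Matrix (Fin m) (Fin m) ℂ) (E : ℂ) :
    Matrix (Fin m ⊕ Fin m) (Fin m ⊕ Fin m) ℂ :=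
  Matrix.fromBlocks (B⁻¹ * (E • 1 - A)) (-(B⁻¹ * C)) 1 0

/-- The transfer matrix `T(E) = t_n(E) ⋯ t_1(E)` (0-indexed: `t_{n-1} ⋯ t_0`). -/
noncomputable def transfer {n m : ℕ} (A B C : Fin n → Matrix (Fin m) (Fin m) ℂ) (E : ℂ) :
    Matrix (Fin m ⊕ Fin m) (Fin m ⊕ Fin m) ℂ :=
  ((List.ofFn fun k : Fin n => tstep (A k) (B k) (C k) E).reverse).prod

/-- The block tridiagonal matrix `h` of the open chain:
diagonal blocks `A_k`, upper blocks `B_k`, lower blocks `C_k`. -/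
noncomputable def hopen {n m : ℕ} (A B C : Fin n → Matrix (Fin m) (Fin m) ℂ) :
    Matrix (Fin n × Fin m) (Fin n × Fin m) ℂ :=
  fun p q =>
    (if p.1 = q.1 then A p.1 p.2 q.2 else 0)
    + (if (p.1 : ℕ) + 1 = (q.1 : ℕ) then B p.1 p.2 q.2 else 0)
    + (if (q.1 : ℕ) + 1 = (p.1 : ℕ) then C p.1 p.2 q.2 else 0)

/-- The `(i,j)` block (of size `m × m`) of an `(nm) × (nm)` matrix. -/
def blk {n m : ℕ} (M : Matrix (Fin n × Fin m) (Fin n × Fin m) ℂ) (i j : Fin n) :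
    Matrix (Fin m) (Fin m) ℂ :=
  fun p q => M (i, p) (j, q)

/-!
Column `j` of `g` solves `(h - E) ψ = δ_j`. Extending column `n` by `ψ_0 = 0` and
`ψ_{n+1} = -B_n⁻¹`, and column `1` by `ψ_0 = -C_1⁻¹` and `ψ_{n+1} = 0`, absorbs the delta, so
both extended columns solve the homogeneous three-term recurrence, which `T(E)` transports from
`(ψ_1, ψ_0)` to `(ψ_{n+1}, ψ_n)`. Hence
`T · [[g_{1n}, g_{11}], [0, -C_1⁻¹]] = [[-B_n⁻¹, 0], [g_{nn}, g_{n1}]]`: the upper left block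
gives `g_{1n}` a left inverse, and solving for `T` gives the formula.
-/

lemma eq_fromBlocks_of_mul_fromBlocks {R ι : Type*} [CommRing R] [Fintype ι] [DecidableEq ι]
    {T : Matrix (ι ⊕ ι) (ι ⊕ ι) R} {b c x y z w : Matrix ι ι R} (hb : IsUnit b) (hc : IsUnit c)
    (h : T * fromBlocks x y 0 (-c⁻¹) = fromBlocks (-b⁻¹) 0 z w) :
    IsUnit x ∧ T = fromBlocks (-b⁻¹ * x⁻¹) (-b⁻¹ * x⁻¹ * y * c) (z * x⁻¹)
      (z * x⁻¹ * y * c - w * c) := by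
  rw [isUnit_iff_isUnit_det] at hb hc
  have hx : IsUnit x.det := by
    have h11 := congrArg toBlocks₁₁ h
    rw [← fromBlocks_toBlocks T, fromBlocks_multiply] at h11
    simp only [toBlocks_fromBlocks₁₁, Matrix.mul_zero, add_zero] at h11
    refine isUnit_det_of_left_inverse (B := -b * T.toBlocks₁₁) ?_
    rw [Matrix.mul_assoc, h11, neg_mul_neg, mul_nonsing_inv _ hb]
  have hinv : fromBlocks x y 0 (-c⁻¹) * fromBlocks x⁻¹ (x⁻¹ * y * c) 0 (-c) = 1 := by
    rw [fromBlocks_multiply]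
    simp [mul_nonsing_inv _ hx, nonsing_inv_mul _ hc, ← Matrix.mul_assoc,
      mul_nonsing_inv_cancel_left _ _ hx]
  refine ⟨(isUnit_iff_isUnit_det x).2 hx, ?_⟩
  calc T = T * fromBlocks x y 0 (-c⁻¹) * fromBlocks x⁻¹ (x⁻¹ * y * c) 0 (-c) := by
        rw [Matrix.mul_assoc, hinv, Matrix.mul_one]
    _ = _ := by
        rw [h, fromBlocks_multiply]
        simp [Matrix.mul_assoc, sub_eq_add_neg]

section

variable {n m : ℕ}

lemma transfer_succ (A B C : Fin (n + 1) → Matrix (Fin m) (Fin m) ℂ) (E : ℂ) :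
    transfer A B C E = tstep (A (Fin.last n)) (B (Fin.last n)) (C (Fin.last n)) E *
      transfer (Fin.init A) (Fin.init B) (Fin.init C) E := by
  rw [transfer, List.ofFn_succ', List.concat_eq_append, List.reverse_append]
  simp [transfer, Fin.init]

lemma tstep_mul_fromRows {ι : Type*} {A B C : Matrix (Fin m) (Fin m) ℂ} {E : ℂ}
    {x y z : Matrix (Fin m) ι ℂ} (hB : IsUnit B)
    (h : C * x + (A - E • 1) * y + B * z = 0) :
    tstep A B C E * fromRows y x = fromRows z y := by
  have hBz : B * z = (E • 1 - A) * y - C * x := by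
    rw [eq_neg_of_add_eq_zero_right h, ← neg_sub A, Matrix.neg_mul]; abel
  have hz : z = B⁻¹ * (E • 1 - A) * y + -(B⁻¹ * C) * x := by
    rw [Matrix.mul_assoc, Matrix.neg_mul, Matrix.mul_assoc, ← Matrix.mul_neg, ← Matrix.mul_add,
      ← sub_eq_add_neg, ← hBz,
      nonsing_inv_mul_cancel_left _ _ ((isUnit_iff_isUnit_det B).mp hB)]
  rw [tstep, fromBlocks_mul_fromRows, ← hz, Matrix.one_mul, Matrix.zero_mul, add_zero]

lemma transfer_mul_fromRows {ι : Type*} {A B C : Fin n → Matrix (Fin m) (Fin m) ℂ}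
    {E : ℂ} (hB : ∀ k, IsUnit (B k)) (φ : ℕ → Matrix (Fin m) ι ℂ)
    (hφ : ∀ k : Fin n, C k * φ k + (A k - E • 1) * φ (k + 1) + B k * φ (k + 2) = 0) :
    transfer A B C E * fromRows (φ 1) (φ 0) = fromRows (φ (n + 1)) (φ n) := by
  induction n with
  | zero => simp [transfer]
  | succ n ih =>
    rw [transfer_succ, Matrix.mul_assoc,
      ih (A := Fin.init A) (B := Fin.init B) (C := Fin.init C) (fun k => hB _)
        (fun k => hφ k.castSucc)]
    exact tstep_mul_fromRows (hB _) (by simpa using hφ (Fin.last n))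

/-- `blkCol M j (k + 1)` is the block `M_{k,j}`; the values at `0` and `n + 1` are the zero
boundary terms of the three-term recurrence. -/
def blkCol (M : Matrix (Fin n × Fin m) (Fin n × Fin m) ℂ) (j : Fin n) (k : ℕ) :
    Matrix (Fin m) (Fin m) ℂ :=
  ∑ l : Fin n, if (l : ℕ) + 1 = k then blk M l j else 0

lemma blkCol_zero (M : Matrix (Fin n × Fin m) (Fin n × Fin m) ℂ) (j : Fin n) :
    blkCol M j 0 = 0 := by
  simp [blkCol]

lemma blkCol_eq_blk (M : Matrix (Fin n × Fin m) (Fin n × Fin m) ℂ) {k : ℕ} (i j : Fin n)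
    (hk : k = i + 1) : blkCol M j k = blk M i j := by
  simp [blkCol, hk, Fin.val_inj]

lemma blkCol_eq_zero_of_lt {M : Matrix (Fin n × Fin m) (Fin n × Fin m) ℂ} {k : ℕ} (j : Fin n)
    (hk : n < k) : blkCol M j k = 0 :=
  Finset.sum_eq_zero fun l _ => if_neg (by omega)

lemma blk_mul (M N : Matrix (Fin n × Fin m) (Fin n × Fin m) ℂ) (i j : Fin n) :
    blk (M * N) i j = ∑ l, blk M i l * blk N l j := by
  ext p q
  simp [blk, mul_apply, Fintype.sum_prod_type, Matrix.sum_apply]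

lemma blk_one (i j : Fin n) :
    blk (1 : Matrix (Fin n × Fin m) (Fin n × Fin m) ℂ) i j = if i = j then 1 else 0 := by
  ext p q
  by_cases h : i = j <;> simp [blk, one_apply, h]

lemma blk_hopen (A B C : Fin n → Matrix (Fin m) (Fin m) ℂ) (i l : Fin n) :
    blk (hopen A B C) i l = (if i = l then A i else 0)
      + (if (i : ℕ) + 1 = l then B i else 0) + (if (l : ℕ) + 1 = i then C i else 0) := by
  ext p q
  simp only [blk, hopen, Matrix.add_apply]
  split_ifs <;> simp_all

lemma blk_hopen_mul (A B C : Fin n → Matrix (Fin m) (Fin m) ℂ)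
    (M : Matrix (Fin n × Fin m) (Fin n × Fin m) ℂ) (i j : Fin n) :
    blk (hopen A B C * M) i j =
      C i * blkCol M j i + A i * blkCol M j (i + 1) + B i * blkCol M j (i + 2) := by
  have hsucc : ∀ l : Fin n, ((i : ℕ) + 1 = l) ↔ ((l : ℕ) + 1 = i + 2) := fun l => by omega
  rw [blk_mul, blkCol_eq_blk M i j rfl, blkCol, blkCol, Finset.mul_sum, Finset.mul_sum]
  simp only [blk_hopen, add_mul, ite_mul, zero_mul, Finset.sum_add_distrib, Finset.sum_ite_eq,
    Finset.mem_univ, if_true, mul_ite, mul_zero, hsucc]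
  abel

variable {A B C : Fin n → Matrix (Fin m) (Fin m) ℂ} {E : ℂ}
  {M : Matrix (Fin n × Fin m) (Fin n × Fin m) ℂ}

lemma blkCol_recurrence (hM : (hopen A B C - E • 1) * M = 1) (i j : Fin n) :
    C i * blkCol M j i + (A i - E • 1) * blkCol M j (i + 1) + B i * blkCol M j (i + 2) =
      if i = j then 1 else 0 := by
  calc _ = blk (hopen A B C * M) i j - E • blk M i j := by
        rw [blk_hopen_mul, blkCol_eq_blk M i j rfl, Matrix.sub_mul, Matrix.smul_mul,
          Matrix.one_mul]
        abel
    _ = blk ((hopen A B C - E • 1) * M) i j := by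
        rw [Matrix.sub_mul, Matrix.smul_mul, Matrix.one_mul]
        rfl
    _ = _ := by rw [hM, blk_one]

lemma recurrence_eq_zero_of_last_column (hM : (hopen A B C - E • 1) * M = 1) {j : Fin n}
    (hj : (j : ℕ) + 1 = n) (hBj : IsUnit (B j)) {φ : ℕ → Matrix (Fin m) (Fin m) ℂ}
    (hφ : ∀ k ≠ n + 1, φ k = blkCol M j k) (hφ_last : φ (n + 1) = -(B j)⁻¹) (k : Fin n) :
    C k * φ k + (A k - E • 1) * φ (k + 1) + B k * φ (k + 2) = 0 := by
  have hrec := blkCol_recurrence hM k j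
  rw [hφ k (by omega), hφ (k + 1) (by omega)]
  by_cases hk : k = j
  · subst hk
    have h2 : (k : ℕ) + 2 = n + 1 := by omega
    rw [h2, if_pos rfl, blkCol_eq_zero_of_lt _ n.lt_succ_self, Matrix.mul_zero, add_zero] at hrec
    rw [h2, hφ_last, Matrix.mul_neg, mul_nonsing_inv _ ((isUnit_iff_isUnit_det _).mp hBj), hrec,
      add_neg_cancel]
  · rw [hφ (k + 2) (by omega)]
    rwa [if_neg hk] at hrec

lemma recurrence_eq_zero_of_first_column (hM : (hopen A B C - E • 1) * M = 1) {j : Fin n}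
    (hj : (j : ℕ) = 0) (hCj : IsUnit (C j)) {φ : ℕ → Matrix (Fin m) (Fin m) ℂ}
    (hφ : ∀ k ≠ 0, φ k = blkCol M j k) (hφ_zero : φ 0 = -(C j)⁻¹) (k : Fin n) :
    C k * φ k + (A k - E • 1) * φ (k + 1) + B k * φ (k + 2) = 0 := by
  have hrec := blkCol_recurrence hM k j
  rw [hφ (k + 1) (by omega), hφ (k + 2) (by omega)]
  by_cases hk : k = j
  · subst hk
    rw [hj, if_pos rfl, blkCol_zero, Matrix.mul_zero, zero_add] at hrec
    rw [hj, hφ_zero, Matrix.mul_neg, mul_nonsing_inv _ ((isUnit_iff_isUnit_det _).mp hCj),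
      add_assoc, hrec, neg_add_cancel]
  · rw [hφ k (by omega)]
    rwa [if_neg hk] at hrec

lemma transfer_mul_fromRows_last_column (hB : ∀ k, IsUnit (B k))
    (hM : (hopen A B C - E • 1) * M = 1) {j : Fin n} (hj : (j : ℕ) + 1 = n) :
    transfer A B C E * fromRows (blkCol M j 1) 0 = fromRows (-(B j)⁻¹) (blkCol M j n) := by
  have h := transfer_mul_fromRows hB _ <| recurrence_eq_zero_of_last_column hM hj (hB j)
    (fun k hk => Function.update_of_ne hk _ _) (Function.update_self ..)
  rwa [Function.update_self, Function.update_of_ne (a := 1) (by omega),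
    Function.update_of_ne (a := 0) (by omega), Function.update_of_ne (a := n) (by omega),
    blkCol_zero] at h

lemma transfer_mul_fromRows_first_column (hB : ∀ k, IsUnit (B k))
    (hM : (hopen A B C - E • 1) * M = 1) {j : Fin n} (hj : (j : ℕ) = 0) (hCj : IsUnit (C j)) :
    transfer A B C E * fromRows (blkCol M j 1) (-(C j)⁻¹) = fromRows 0 (blkCol M j n) := by
  have h := transfer_mul_fromRows hB _ <| recurrence_eq_zero_of_first_column hM hj hCj
    (fun k hk => Function.update_of_ne hk _ _) (Function.update_self ..)
  rwa [Function.update_self, Function.update_of_ne (a := 1) (by omega),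
    Function.update_of_ne (a := n + 1) (by omega), Function.update_of_ne (a := n) (by omega),
    blkCol_eq_zero_of_lt _ n.lt_succ_self] at h

end

theorem stmt7 {n m : ℕ} (hn : 2 ≤ n)
    (A B C : Fin n → Matrix (Fin m) (Fin m) ℂ)
    (hB : ∀ k, IsUnit (B k)) (hC : ∀ k, IsUnit (C k)) (E : ℂ)
    (hE : IsUnit (hopen A B C - E • 1).det) :
    let g := (hopen A B C - E • 1)⁻¹
    let g1n := blk g ⟨0, by omega⟩ ⟨n - 1, by omega⟩
    let g11 := blk g ⟨0, by omega⟩ ⟨0, by omega⟩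
    let gnn := blk g ⟨n - 1, by omega⟩ ⟨n - 1, by omega⟩
    let gn1 := blk g ⟨n - 1, by omega⟩ ⟨0, by omega⟩
    IsUnit g1n ∧
    transfer A B C E =
      Matrix.fromBlocks
        (-(B ⟨n - 1, by omega⟩)⁻¹ * g1n⁻¹)
        (-(B ⟨n - 1, by omega⟩)⁻¹ * g1n⁻¹ * g11 * C ⟨0, by omega⟩)
        (gnn * g1n⁻¹)
        (gnn * g1n⁻¹ * g11 * C ⟨0, by omega⟩ - gn1 * C ⟨0, by omega⟩) := by
  intro g g1n g11 gnn gn1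
  have hn1 : n - 1 + 1 = n := by omega
  have hg : (hopen A B C - E • 1) * g = 1 := mul_nonsing_inv _ hE
  have hlast := transfer_mul_fromRows_last_column hB hg (j := ⟨n - 1, by omega⟩) hn1
  have hfirst := transfer_mul_fromRows_first_column hB hg (j := ⟨0, by omega⟩) rfl (hC _)
  rw [blkCol_eq_blk g ⟨0, by omega⟩ _ rfl, blkCol_eq_blk g ⟨n - 1, by omega⟩ _ hn1.symm]
    at hlast hfirst
  refine eq_fromBlocks_of_mul_fromBlocks (hB _) (hC _) ?_
  rw [← fromCols_fromRows_eq_fromBlocks, mul_fromCols, ← fromCols_fromRows_eq_fromBlocks]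
  exact congrArg₂ fromCols hlast hfirst
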